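/- arXiv:2602.00856 — 8 statements merged into one kernel-verified Lean document; each statement's English description precedes it below -/
import Mathlib

section
/- Let X, A, Y, B be finite nonempty index types with |X| = |Y| = d. Let R be a positive semidefinite complex matrix indexed by (X × A × Y × B) × (X × A × Y × B). Then R satisfies Tr_{Y×B}[R] = 1_{X×A} and Tr_{X×B}[R] = 1_{Y×A} (i.e., R is the Choi operator of a partially bistochastic channel, bistochastic in the pair X–Y) if and only if there exist a Hermitian matrix S indexed by X × A × Y × B with Tr_B[S] = 0 and a Hermitian matrix T indexed by X × A × Y with Tr_X[T] = 0 and Tr_Y[T] = 0, such that R = (1/(d·|B|))·1_{X×A×Y×B} + S + T ⊗ 1_B. -/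
/-!
Put `c = (d |B|)⁻¹`. Every Hermitian `R` splits as `c • 1 + S + T ⊗ 1_B` with `Tr_B S = 0`:
take `T = |B|⁻¹ Tr_B R - c • 1` and let `S` be the remainder. For such a splitting and
`Z ∈ {X, Y}` (both of size `d`) one has
`Tr_Z Tr_B R = c |B| d • 1 + |B| • Tr_Z T = 1 + |B| • Tr_Z T`, so the two normalisation
conditions on `R` say exactly that `Tr_X T = 0` and `Tr_Y T = 0`.
-/

open Matrix ComplexOrder
open scoped Kronecker

namespace Matrix

variable {ι κ α R : Type*}

/-- The partial trace over `κ`, after identifying `α` with `ι × κ` through `e`. -/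
def partialTrace [Semiring R] [Fintype κ] (e : α ≃ ι × κ) : Matrix α α R →ₗ[R] Matrix ι ι R where
  toFun M := of fun i i' => ∑ k, M (e.symm (i, k)) (e.symm (i', k))
  map_add' M N := by ext; simp [Finset.sum_add_distrib]
  map_smul' r M := by ext; simp [Finset.mul_sum]

theorem partialTrace_apply [Semiring R] [Fintype κ] (e : α ≃ ι × κ) (M : Matrix α α R)
    (i i' : ι) : partialTrace e M i i' = ∑ k, M (e.symm (i, k)) (e.symm (i', k)) :=
  rfl

theorem partialTrace_submatrix_kronecker [CommSemiring R] [Fintype κ] (e : α ≃ ι × κ)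
    (A : Matrix ι ι R) (B : Matrix κ κ R) :
    partialTrace e ((A ⊗ₖ B).submatrix e e) = B.trace • A := by
  ext i i'
  simp [partialTrace_apply, kroneckerMap_apply, trace, Finset.mul_sum, mul_comm]

theorem partialTrace_one [CommSemiring R] [Fintype κ] [DecidableEq α] [DecidableEq ι]
    (e : α ≃ ι × κ) : partialTrace e (1 : Matrix α α R) = (Fintype.card κ : R) • 1 := by
  classical
  rw [← trace_one, ← partialTrace_submatrix_kronecker e (1 : Matrix ι ι R), one_kronecker_one,
    submatrix_one_equiv]

theorem IsHermitian.partialTrace [Semiring R] [StarRing R] [Fintype κ] {M : Matrix α α R}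
    (hM : M.IsHermitian) (e : α ≃ ι × κ) : (partialTrace e M).IsHermitian := by
  ext i i'
  simp [partialTrace_apply, star_sum, hM.apply]

theorem IsHermitian.kronecker [CommSemiring R] [StarRing R] {A : Matrix ι ι R}
    {B : Matrix κ κ R} (hA : A.IsHermitian) (hB : B.IsHermitian) : (A ⊗ₖ B).IsHermitian := by
  rw [IsHermitian, conjTranspose_kronecker, hA.eq, hB.eq]

section Decomposition

variable {α U B : Type*} [Fintype B] [Nonempty B] [DecidableEq α] [DecidableEq U]
  [DecidableEq B] (eB : α ≃ U × B)

theorem exists_eq_smul_one_add_add_kronecker_one_of_isHermitian {R : Matrix α α ℂ}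
    (hR : R.IsHermitian) {c : ℂ} (hc : IsSelfAdjoint c) :
    ∃ (S : Matrix α α ℂ) (T : Matrix U U ℂ), S.IsHermitian ∧ partialTrace eB S = 0 ∧
      T.IsHermitian ∧ R = c • 1 + S + (T ⊗ₖ (1 : Matrix B B ℂ)).submatrix eB eB := by
  have hN : (Fintype.card B : ℂ) ≠ 0 := Nat.cast_ne_zero.2 Fintype.card_ne_zero
  set T := (Fintype.card B : ℂ)⁻¹ • partialTrace eB R - c • 1
  have hT : T.IsHermitian :=
    ((hR.partialTrace eB).smul (by simp [IsSelfAdjoint])).sub (isHermitian_one.smul hc)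
  refine ⟨R - c • 1 - (T ⊗ₖ 1).submatrix eB eB, T,
    (hR.sub (isHermitian_one.smul hc)).sub ((hT.kronecker isHermitian_one).submatrix eB),
    ?_, hT, by abel⟩
  simp only [T, map_sub, map_smul, partialTrace_one, partialTrace_submatrix_kronecker, trace_one]
  match_scalars <;> field_simp <;> ring

theorem partialTrace_partialTrace_decomposition_eq_one_iff {Q Z : Type*} [Fintype Z]
    [DecidableEq Q] (eZ : U ≃ Q × Z) {d : ℕ} (hZ : Fintype.card Z = d) (hd : d ≠ 0)
    {S : Matrix α α ℂ} (hS : partialTrace eB S = 0) (T : Matrix U U ℂ) :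
    partialTrace eZ (partialTrace eB (((d : ℂ) * Fintype.card B)⁻¹ • 1 + S +
      (T ⊗ₖ (1 : Matrix B B ℂ)).submatrix eB eB)) = 1 ↔ partialTrace eZ T = 0 := by
  have hN : (Fintype.card B : ℂ) ≠ 0 := Nat.cast_ne_zero.2 Fintype.card_ne_zero
  have hd' : (d : ℂ) ≠ 0 := Nat.cast_ne_zero.2 hd
  have key : partialTrace eZ (partialTrace eB (((d : ℂ) * Fintype.card B)⁻¹ • 1 + S +
      (T ⊗ₖ (1 : Matrix B B ℂ)).submatrix eB eB)) =
        1 + (Fintype.card B : ℂ) • partialTrace eZ T := by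
    simp only [map_add, map_smul, partialTrace_one, hS, partialTrace_submatrix_kronecker,
      trace_one, hZ, smul_smul, add_zero]
    rw [show ((d : ℂ) * Fintype.card B)⁻¹ * Fintype.card B * d = 1 by field_simp, one_smul]
  rw [key, add_eq_left, smul_eq_zero_iff_right hN]

theorem partialTrace_eq_one_and_iff_exists_decomposition {P Q X Y : Type*} [Fintype X]
    [Fintype Y] [Nonempty X] [DecidableEq P] [DecidableEq Q] (eX : U ≃ Q × X) (eY : U ≃ P × Y)
    {d : ℕ} (hX : Fintype.card X = d) (hY : Fintype.card Y = d) {R : Matrix α α ℂ}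
    (hR : R.IsHermitian) :
    (partialTrace eY (partialTrace eB R) = 1 ∧ partialTrace eX (partialTrace eB R) = 1) ↔
      ∃ (S : Matrix α α ℂ) (T : Matrix U U ℂ), S.IsHermitian ∧ partialTrace eB S = 0 ∧
        T.IsHermitian ∧ partialTrace eX T = 0 ∧ partialTrace eY T = 0 ∧
        R = ((d : ℂ) * Fintype.card B)⁻¹ • 1 + S + (T ⊗ₖ (1 : Matrix B B ℂ)).submatrix eB eB := by
  have hd : d ≠ 0 := hX ▸ Fintype.card_ne_zero
  constructor
  · rintro ⟨hRY, hRX⟩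
    obtain ⟨S, T, hS, hSB, hT, rfl⟩ :=
      exists_eq_smul_one_add_add_kronecker_one_of_isHermitian eB hR
        (c := ((d : ℂ) * Fintype.card B)⁻¹) (by simp [IsSelfAdjoint])
    exact ⟨S, T, hS, hSB, hT,
      (partialTrace_partialTrace_decomposition_eq_one_iff eB eX hX hd hSB T).1 hRX,
      (partialTrace_partialTrace_decomposition_eq_one_iff eB eY hY hd hSB T).1 hRY, rfl⟩
  · rintro ⟨S, T, -, hSB, -, hTX, hTY, rfl⟩
    exact ⟨(partialTrace_partialTrace_decomposition_eq_one_iff eB eY hY hd hSB T).2 hTY,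
      (partialTrace_partialTrace_decomposition_eq_one_iff eB eX hX hd hSB T).2 hTX⟩

end Decomposition

end Matrix

section Coordinates

variable {X A Y B : Type*}

variable (X A Y B) in
def Equiv.splitLast : X × A × Y × B ≃ (X × A × Y) × B :=
  (Equiv.prodCongr (Equiv.refl X) (Equiv.prodAssoc A Y B).symm).trans
    (Equiv.prodAssoc X (A × Y) B).symm

theorem forall_sum_eq_zero_iff_partialTrace_splitLast [Fintype B]
    (M : Matrix (X × A × Y × B) (X × A × Y × B) ℂ) :
    (∀ x a y x' a' y', ∑ b : B, M (x, a, y, b) (x', a', y', b) = 0) ↔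
      partialTrace (Equiv.splitLast X A Y B) M = 0 := by
  simp [← Matrix.ext_iff, partialTrace_apply, Equiv.splitLast]

theorem forall_sum_eq_zero_iff_partialTrace_prodComm [Fintype X]
    (M : Matrix (X × A × Y) (X × A × Y) ℂ) :
    (∀ a y a' y', ∑ x : X, M (x, a, y) (x, a', y') = 0) ↔
      partialTrace (Equiv.prodComm X (A × Y)) M = 0 := by
  simp [← Matrix.ext_iff, partialTrace_apply]

theorem forall_sum_eq_zero_iff_partialTrace_prodAssoc_symm [Fintype Y]
    (M : Matrix (X × A × Y) (X × A × Y) ℂ) :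
    (∀ x a x' a', ∑ y : Y, M (x, a, y) (x', a', y) = 0) ↔
      partialTrace (Equiv.prodAssoc X A Y).symm M = 0 := by
  simp [← Matrix.ext_iff, partialTrace_apply]

theorem forall_sum_sum_eq_ite_iff_partialTrace_prodComm [Fintype X] [Fintype B] [DecidableEq A]
    [DecidableEq Y] (M : Matrix (X × A × Y × B) (X × A × Y × B) ℂ) :
    (∀ y a y' a', (∑ x : X, ∑ b : B, M (x, a, y, b) (x, a', y', b)) =
        if (y, a) = (y', a') then 1 else 0) ↔
      partialTrace (Equiv.prodComm X (A × Y)) (partialTrace (Equiv.splitLast X A Y B) M) = 1 := by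
  simp [← Matrix.ext_iff, partialTrace_apply, Equiv.splitLast, one_apply]
  exact ⟨fun h a y a' y' => by simpa [and_comm] using h y a y' a',
    fun h y a y' a' => by simpa [and_comm] using h a y a' y'⟩

theorem forall_sum_sum_eq_ite_iff_partialTrace_prodAssoc_symm [Fintype Y] [Fintype B]
    [DecidableEq X] [DecidableEq A] (M : Matrix (X × A × Y × B) (X × A × Y × B) ℂ) :
    (∀ x a x' a', (∑ y : Y, ∑ b : B, M (x, a, y, b) (x', a', y, b)) =
        if (x, a) = (x', a') then 1 else 0) ↔
      partialTrace (Equiv.prodAssoc X A Y).symm (partialTrace (Equiv.splitLast X A Y B) M) = 1 := by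
  simp [← Matrix.ext_iff, partialTrace_apply, Equiv.splitLast, one_apply]

theorem of_mul_ite_eq_submatrix_kronecker_one [DecidableEq B]
    (T : Matrix (X × A × Y) (X × A × Y) ℂ) :
    Matrix.of (fun (u u' : X × A × Y × B) =>
      T (u.1, u.2.1, u.2.2.1) (u'.1, u'.2.1, u'.2.2.1) * (if u.2.2.2 = u'.2.2.2 then 1 else 0)) =
        (T ⊗ₖ (1 : Matrix B B ℂ)).submatrix (Equiv.splitLast X A Y B)
          (Equiv.splitLast X A Y B) := by
  ext u u'
  simp [kroneckerMap_apply, one_apply, Equiv.splitLast]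

end Coordinates

theorem stmt0_general {X A Y B : Type*} [Fintype X] [Fintype A] [Fintype Y] [Fintype B]
    [DecidableEq X] [DecidableEq A] [DecidableEq Y] [DecidableEq B]
    [Nonempty X] [Nonempty B]
    (d : ℕ) (hX : Fintype.card X = d) (hY : Fintype.card Y = d)
    (R : Matrix (X × A × Y × B) (X × A × Y × B) ℂ) (hR : R.PosSemidef) :
    ((∀ x a x' a', (∑ y : Y, ∑ b : B, R (x, a, y, b) (x', a', y, b)) =
        if (x, a) = (x', a') then 1 else 0) ∧
     (∀ y a y' a', (∑ x : X, ∑ b : B, R (x, a, y, b) (x, a', y', b)) =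
        if (y, a) = (y', a') then 1 else 0)) ↔
    ∃ (S : Matrix (X × A × Y × B) (X × A × Y × B) ℂ)
      (T : Matrix (X × A × Y) (X × A × Y) ℂ),
      S.IsHermitian ∧
      (∀ x a y x' a' y', (∑ b : B, S (x, a, y, b) (x', a', y', b)) = 0) ∧
      T.IsHermitian ∧
      (∀ a y a' y', (∑ x : X, T (x, a, y) (x, a', y')) = 0) ∧
      (∀ x a x' a', (∑ y : Y, T (x, a, y) (x', a', y)) = 0) ∧
      R = ((d : ℂ) * (Fintype.card B : ℂ))⁻¹ • 1 + S +
        Matrix.of (fun (u u' : X × A × Y × B) =>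
          T (u.1, u.2.1, u.2.2.1) (u'.1, u'.2.1, u'.2.2.1) *
            (if u.2.2.2 = u'.2.2.2 then 1 else 0)) := by
  simp only [forall_sum_sum_eq_ite_iff_partialTrace_prodAssoc_symm,
    forall_sum_sum_eq_ite_iff_partialTrace_prodComm, forall_sum_eq_zero_iff_partialTrace_splitLast,
    forall_sum_eq_zero_iff_partialTrace_prodComm,
    forall_sum_eq_zero_iff_partialTrace_prodAssoc_symm, of_mul_ite_eq_submatrix_kronecker_one]
  exact partialTrace_eq_one_and_iff_exists_decomposition (Equiv.splitLast X A Y B)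
    (Equiv.prodComm X (A × Y)) (Equiv.prodAssoc X A Y).symm hX hY hR.isHermitian

/-- A PSD matrix `R` on `X × A × Y × B` is the Choi operator of a
partially bistochastic channel (bistochastic in the pair `X`–`Y`), i.e.
`Tr_{Y×B}[R] = 1_{X×A}` and `Tr_{X×B}[R] = 1_{Y×A}`, if and only if
`R = (1/(d·|B|))·1 + S + T ⊗ 1_B` with `S` Hermitian, `Tr_B[S] = 0`, and `T`
Hermitian with `Tr_X[T] = 0` and `Tr_Y[T] = 0`. -/
theorem stmt0 {X A Y B : Type*} [Fintype X] [Fintype A] [Fintype Y] [Fintype B]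
    [DecidableEq X] [DecidableEq A] [DecidableEq Y] [DecidableEq B]
    [Nonempty X] [Nonempty A] [Nonempty Y] [Nonempty B]
    (d : ℕ) (hX : Fintype.card X = d) (hY : Fintype.card Y = d)
    (R : Matrix (X × A × Y × B) (X × A × Y × B) ℂ) (hR : R.PosSemidef) :
    ((∀ x a x' a', (∑ y : Y, ∑ b : B, R (x, a, y, b) (x', a', y, b)) =
        if (x, a) = (x', a') then 1 else 0) ∧
     (∀ y a y' a', (∑ x : X, ∑ b : B, R (x, a, y, b) (x, a', y', b)) =
        if (y, a) = (y', a') then 1 else 0)) ↔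
    ∃ (S : Matrix (X × A × Y × B) (X × A × Y × B) ℂ)
      (T : Matrix (X × A × Y) (X × A × Y) ℂ),
      S.IsHermitian ∧
      (∀ x a y x' a' y', (∑ b : B, S (x, a, y, b) (x', a', y', b)) = 0) ∧
      T.IsHermitian ∧
      (∀ a y a' y', (∑ x : X, T (x, a, y) (x, a', y')) = 0) ∧
      (∀ x a x' a', (∑ y : Y, T (x, a, y) (x', a', y)) = 0) ∧
      R = ((d : ℂ) * (Fintype.card B : ℂ))⁻¹ • 1 + S +
        Matrix.of (fun (u u' : X × A × Y × B) =>
          T (u.1, u.2.1, u.2.2.1) (u'.1, u'.2.1, u'.2.2.1) *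
            (if u.2.2.2 = u'.2.2.2 then 1 else 0)) :=
  stmt0_general d hX hY R hR
end

section
/- Let A and B be finite index types with |A| = |B| = d ≥ 1, and let R be a positive semidefinite complex matrix indexed by (A × B) × (A × B). Then Tr[Rᵀ C] = 1 holds for every bistochastic channel Choi operator C indexed by (A × B) × (A × B) if and only if there exist traceless Hermitian matrices X_A (indexed by A) and X_B (indexed by B) such that R = (1/d)·1_{A×B} + X_A ⊗ 1_B + 1_A ⊗ X_B. -/
/-!
The partial traces `Tr_B` and `Tr_A` are the adjoints of `X ↦ X ⊗ 1` and `Y ↦ 1 ⊗ Y` for the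
trace pairing, so for bistochastic `C` and `R = d⁻¹ 1 + X ⊗ 1 + 1 ⊗ Y` we get
`Tr[Rᵀ C] = d⁻¹ Tr C + Tr X + Tr Y = 1`.

Conversely, `d⁻¹ 1` is bistochastic, so `Tr R = d`; and for Hermitian `Δ` with vanishing partial
traces, `d⁻¹ (1 + ε Δᵀ)` is still bistochastic for small `ε > 0`, so `Tr[Δ R] = 0`. Let `S` be the
matrix of the form `d⁻¹ 1 + X ⊗ 1 + 1 ⊗ Y` with the same partial traces as `R`. Then `Δ = R - S`
is such a matrix and is orthogonal to `S`, whence `Tr[Δ Δ] = Tr[Δ R] - Tr[Δ S] = 0` and `R = S`.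
-/

open Matrix Kronecker ComplexOrder

namespace Matrix

variable {m n α : Type*}

section PartialTrace

def partialTraceRight [Fintype n] [AddCommMonoid α] (M : Matrix (m × n) (m × n) α) :
    Matrix m m α :=
  of fun i i' => ∑ j, M (i, j) (i', j)

def partialTraceLeft [Fintype m] [AddCommMonoid α] (M : Matrix (m × n) (m × n) α) :
    Matrix n n α :=
  of fun j j' => ∑ i, M (i, j) (i, j')

section Right

variable [Fintype n]

@[simp]
lemma partialTraceRight_apply [AddCommMonoid α] (M : Matrix (m × n) (m × n) α) (i i' : m) :
    partialTraceRight M i i' = ∑ j, M (i, j) (i', j) := rfl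

lemma partialTraceRight_add [AddCommMonoid α] (M N : Matrix (m × n) (m × n) α) :
    partialTraceRight (M + N) = partialTraceRight M + partialTraceRight N := by
  ext; simp [Finset.sum_add_distrib]

lemma partialTraceRight_sub [AddCommGroup α] (M N : Matrix (m × n) (m × n) α) :
    partialTraceRight (M - N) = partialTraceRight M - partialTraceRight N := by
  ext; simp [Finset.sum_sub_distrib]

lemma partialTraceRight_smul [Semiring α] (c : α) (M : Matrix (m × n) (m × n) α) :
    partialTraceRight (c • M) = c • partialTraceRight M := by
  ext; simp [Finset.mul_sum]

lemma partialTraceRight_transpose [AddCommMonoid α] (M : Matrix (m × n) (m × n) α) :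
    partialTraceRight Mᵀ = (partialTraceRight M)ᵀ := rfl

lemma partialTraceRight_kronecker [CommSemiring α] (X : Matrix m m α) (Y : Matrix n n α) :
    partialTraceRight (X ⊗ₖ Y) = Y.trace • X := by
  ext; simp [trace, Finset.mul_sum, mul_comm]

lemma partialTraceRight_one [CommSemiring α] [DecidableEq m] [DecidableEq n] :
    partialTraceRight (1 : Matrix (m × n) (m × n) α) = (Fintype.card n : α) • 1 := by
  rw [← one_kronecker_one, partialTraceRight_kronecker, trace_one]

lemma partialTraceRight_eq_one_iff [AddCommMonoidWithOne α] [DecidableEq m]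
    (M : Matrix (m × n) (m × n) α) :
    partialTraceRight M = 1 ↔ ∀ i i', ∑ j, M (i, j) (i', j) = if i = i' then 1 else 0 := by
  simp [← Matrix.ext_iff, one_apply]

variable [Fintype m]

@[simp]
lemma trace_partialTraceRight [AddCommMonoid α] (M : Matrix (m × n) (m × n) α) :
    (partialTraceRight M).trace = M.trace := by
  simp [trace, Fintype.sum_prod_type]

lemma trace_kronecker_one_mul [CommSemiring α] [DecidableEq n] (X : Matrix m m α)
    (M : Matrix (m × n) (m × n) α) :
    ((X ⊗ₖ (1 : Matrix n n α)) * M).trace = (X * partialTraceRight M).trace := by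
  simp [trace, mul_apply, Fintype.sum_prod_type, one_apply, Finset.mul_sum]
  exact Finset.sum_congr rfl fun _ _ => Finset.sum_comm

end Right

section Left

variable [Fintype m]

@[simp]
lemma partialTraceLeft_apply [AddCommMonoid α] (M : Matrix (m × n) (m × n) α) (j j' : n) :
    partialTraceLeft M j j' = ∑ i, M (i, j) (i, j') := rfl

lemma partialTraceLeft_add [AddCommMonoid α] (M N : Matrix (m × n) (m × n) α) :
    partialTraceLeft (M + N) = partialTraceLeft M + partialTraceLeft N := by
  ext; simp [Finset.sum_add_distrib]

lemma partialTraceLeft_sub [AddCommGroup α] (M N : Matrix (m × n) (m × n) α) :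
    partialTraceLeft (M - N) = partialTraceLeft M - partialTraceLeft N := by
  ext; simp [Finset.sum_sub_distrib]

lemma partialTraceLeft_smul [Semiring α] (c : α) (M : Matrix (m × n) (m × n) α) :
    partialTraceLeft (c • M) = c • partialTraceLeft M := by
  ext; simp [Finset.mul_sum]

lemma partialTraceLeft_transpose [AddCommMonoid α] (M : Matrix (m × n) (m × n) α) :
    partialTraceLeft Mᵀ = (partialTraceLeft M)ᵀ := rfl

lemma partialTraceLeft_kronecker [CommSemiring α] (X : Matrix m m α) (Y : Matrix n n α) :
    partialTraceLeft (X ⊗ₖ Y) = X.trace • Y := by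
  ext; simp [trace, Finset.sum_mul]

lemma partialTraceLeft_one [CommSemiring α] [DecidableEq m] [DecidableEq n] :
    partialTraceLeft (1 : Matrix (m × n) (m × n) α) = (Fintype.card m : α) • 1 := by
  rw [← one_kronecker_one, partialTraceLeft_kronecker, trace_one]

lemma partialTraceLeft_eq_one_iff [AddCommMonoidWithOne α] [DecidableEq n]
    (M : Matrix (m × n) (m × n) α) :
    partialTraceLeft M = 1 ↔ ∀ j j', ∑ i, M (i, j) (i, j') = if j = j' then 1 else 0 := by
  simp [← Matrix.ext_iff, one_apply]

variable [Fintype n]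

@[simp]
lemma trace_partialTraceLeft [AddCommMonoid α] (M : Matrix (m × n) (m × n) α) :
    (partialTraceLeft M).trace = M.trace := by
  simp [trace, Fintype.sum_prod_type]
  exact Finset.sum_comm

lemma trace_one_kronecker_mul [CommSemiring α] [DecidableEq m] (Y : Matrix n n α)
    (M : Matrix (m × n) (m × n) α) :
    (((1 : Matrix m m α) ⊗ₖ Y) * M).trace = (Y * partialTraceLeft M).trace := by
  simp [trace, mul_apply, Fintype.sum_prod_type, one_apply, Finset.mul_sum]
  rw [Finset.sum_comm]
  exact Finset.sum_congr rfl fun _ _ => Finset.sum_comm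

end Left

section Star

variable [NonUnitalSemiring α] [StarRing α] {M : Matrix (m × n) (m × n) α}

lemma IsHermitian.partialTraceRight [Fintype n] (hM : M.IsHermitian) :
    M.partialTraceRight.IsHermitian := by
  ext i i'
  simp only [conjTranspose_apply, partialTraceRight_apply, star_sum]
  exact Finset.sum_congr rfl fun j _ => hM.apply _ _

lemma IsHermitian.partialTraceLeft [Fintype m] (hM : M.IsHermitian) :
    M.partialTraceLeft.IsHermitian := by
  ext j j'
  simp only [conjTranspose_apply, partialTraceLeft_apply, star_sum]
  exact Finset.sum_congr rfl fun i _ => hM.apply _ _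

end Star

end PartialTrace

section KroneckerSum

variable [DecidableEq m] [DecidableEq n]

def kroneckerSum [NonAssocSemiring α] (X : Matrix m m α) (Y : Matrix n n α) :
    Matrix (m × n) (m × n) α :=
  X ⊗ₖ 1 + 1 ⊗ₖ Y

variable [CommSemiring α] (X : Matrix m m α) (Y : Matrix n n α)

lemma transpose_kroneckerSum : (kroneckerSum X Y)ᵀ = kroneckerSum Xᵀ Yᵀ := by
  simp [kroneckerSum, ← kroneckerMap_transpose]

lemma IsHermitian.kroneckerSum [StarRing α] {X : Matrix m m α} {Y : Matrix n n α}
    (hX : X.IsHermitian) (hY : Y.IsHermitian) : (kroneckerSum X Y).IsHermitian := by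
  simp only [Matrix.kroneckerSum, IsHermitian, conjTranspose_add, conjTranspose_kronecker,
    conjTranspose_one, hX.eq, hY.eq]

lemma partialTraceRight_kroneckerSum [Fintype n] :
    partialTraceRight (kroneckerSum X Y) = (Fintype.card n : α) • X + Y.trace • 1 := by
  simp [kroneckerSum, partialTraceRight_add, partialTraceRight_kronecker]

lemma partialTraceLeft_kroneckerSum [Fintype m] :
    partialTraceLeft (kroneckerSum X Y) = X.trace • 1 + (Fintype.card m : α) • Y := by
  simp [kroneckerSum, partialTraceLeft_add, partialTraceLeft_kronecker]

lemma trace_kroneckerSum_mul [Fintype m] [Fintype n] (M : Matrix (m × n) (m × n) α) :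
    (kroneckerSum X Y * M).trace =
      (X * partialTraceRight M).trace + (Y * partialTraceLeft M).trace := by
  rw [kroneckerSum, add_mul, trace_add, trace_kronecker_one_mul, trace_one_kronecker_mul]

lemma trace_transpose_smul_one_add_kroneckerSum_mul [Fintype m] [Fintype n] (c : α)
    {X : Matrix m m α} {Y : Matrix n n α} (hX : X.trace = 0) (hY : Y.trace = 0)
    {C : Matrix (m × n) (m × n) α} (hCR : partialTraceRight C = 1)
    (hCL : partialTraceLeft C = 1) :
    ((c • 1 + kroneckerSum X Y)ᵀ * C).trace = c * Fintype.card m := by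
  rw [transpose_add, transpose_smul, transpose_one, transpose_kroneckerSum, add_mul, trace_add,
    smul_mul, one_mul, trace_smul, trace_kroneckerSum_mul, hCR, hCL, ← trace_partialTraceRight,
    hCR]
  simp [hX, hY]

lemma trace_smul_one_add_kroneckerSum_mul_eq_zero [Fintype m] [Fintype n] (c : α)
    (X : Matrix m m α) (Y : Matrix n n α) {M : Matrix (m × n) (m × n) α}
    (hMR : partialTraceRight M = 0) (hML : partialTraceLeft M = 0) :
    ((c • 1 + kroneckerSum X Y) * M).trace = 0 := by
  rw [add_mul, trace_add, smul_mul, one_mul, trace_smul, trace_kroneckerSum_mul, hMR, hML,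
    ← trace_partialTraceRight, hMR]
  simp

end KroneckerSum

open scoped MatrixOrder Matrix.Norms.L2Operator in
lemma IsHermitian.exists_pos_posSemidef_one_add_smul [Fintype n] [DecidableEq n]
    {H : Matrix n n ℂ} (hH : H.IsHermitian) :
    ∃ ε : ℝ, 0 < ε ∧ (1 + (ε : ℂ) • H).PosSemidef := by
  set ε : ℝ := (‖H‖ + 1)⁻¹
  have hε : 0 < ε := by positivity
  refine ⟨ε, hε, nonneg_iff_posSemidef.mp ?_⟩
  have hsa : IsSelfAdjoint ((ε : ℂ) • H) :=
    IsSelfAdjoint.smul (Complex.conj_ofReal ε) hH.isSelfAdjoint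
  have hnorm : ‖(ε : ℂ) • H‖ ≤ 1 := by
    rw [norm_smul, Complex.norm_real, Real.norm_of_nonneg hε.le]
    exact (inv_mul_le_one₀ (by positivity)).mpr (by linarith)
  calc (0 : Matrix n n ℂ) = -algebraMap ℝ _ 1 + 1 := by simp
    _ ≤ -algebraMap ℝ _ ‖(ε : ℂ) • H‖ + 1 := by gcongr
    _ ≤ (ε : ℂ) • H + 1 := by gcongr; exact hsa.neg_algebraMap_norm_le_self
    _ = _ := add_comm _ _

lemma IsHermitian.inv_natCast_smul_sub_one [DecidableEq m] {X : Matrix m m ℂ}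
    (hX : X.IsHermitian) (d : ℕ) : ((d : ℂ)⁻¹ • (X - 1)).IsHermitian :=
  (hX.sub isHermitian_one).smul (IsSelfAdjoint.natCast d).inv₀

section LocalPart

variable [Fintype m] [Fintype n] {d : ℕ} {R : Matrix (m × n) (m × n) ℂ}

lemma trace_inv_smul_partialTraceRight_sub_one [DecidableEq m] (hm : Fintype.card m = d)
    (hR : R.trace = d) : ((d : ℂ)⁻¹ • (partialTraceRight R - 1)).trace = 0 := by
  rw [trace_smul, trace_sub, trace_partialTraceRight, hR, trace_one, hm, sub_self, smul_zero]

lemma trace_inv_smul_partialTraceLeft_sub_one [DecidableEq n] (hn : Fintype.card n = d)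
    (hR : R.trace = d) : ((d : ℂ)⁻¹ • (partialTraceLeft R - 1)).trace = 0 := by
  rw [trace_smul, trace_sub, trace_partialTraceLeft, hR, trace_one, hn, sub_self, smul_zero]

variable [DecidableEq m] [DecidableEq n]

noncomputable def localPart (d : ℕ) (R : Matrix (m × n) (m × n) ℂ) :
    Matrix (m × n) (m × n) ℂ :=
  (d : ℂ)⁻¹ • 1 + kroneckerSum ((d : ℂ)⁻¹ • (partialTraceRight R - 1))
    ((d : ℂ)⁻¹ • (partialTraceLeft R - 1))

lemma IsHermitian.localPart (hR : R.IsHermitian) (d : ℕ) : (localPart d R).IsHermitian :=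
  (isHermitian_one.smul (IsSelfAdjoint.natCast d).inv₀).add <|
    (hR.partialTraceRight.inv_natCast_smul_sub_one d).kroneckerSum
      (hR.partialTraceLeft.inv_natCast_smul_sub_one d)

lemma partialTraceRight_localPart (hn : Fintype.card n = d) (hd : d ≠ 0) (hR : R.trace = d) :
    partialTraceRight (localPart d R) = partialTraceRight R := by
  have hd' : (d : ℂ) ≠ 0 := by exact_mod_cast hd
  rw [localPart, partialTraceRight_add, partialTraceRight_smul, partialTraceRight_one,
    partialTraceRight_kroneckerSum, trace_inv_smul_partialTraceLeft_sub_one hn hR, hn]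
  simp only [smul_smul, zero_smul, add_zero, smul_sub, mul_inv_cancel₀ hd', inv_mul_cancel₀ hd',
    one_smul]
  abel

lemma partialTraceLeft_localPart (hm : Fintype.card m = d) (hd : d ≠ 0) (hR : R.trace = d) :
    partialTraceLeft (localPart d R) = partialTraceLeft R := by
  have hd' : (d : ℂ) ≠ 0 := by exact_mod_cast hd
  rw [localPart, partialTraceLeft_add, partialTraceLeft_smul, partialTraceLeft_one,
    partialTraceLeft_kroneckerSum, trace_inv_smul_partialTraceRight_sub_one hm hR, hm]
  simp only [smul_smul, zero_smul, zero_add, smul_sub, mul_inv_cancel₀ hd', inv_mul_cancel₀ hd',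
    one_smul]
  abel

end LocalPart

section Bistochastic

variable [Fintype m] [Fintype n] [DecidableEq m] [DecidableEq n]

def IsBistochasticChoi (C : Matrix (m × n) (m × n) ℂ) : Prop :=
  C.PosSemidef ∧ partialTraceRight C = 1 ∧ partialTraceLeft C = 1

variable {d : ℕ} {Δ R : Matrix (m × n) (m × n) ℂ}

lemma isBistochasticChoi_inv_smul_one_add_smul (hm : Fintype.card m = d)
    (hn : Fintype.card n = d) (hd : d ≠ 0) (hΔR : partialTraceRight Δ = 0)
    (hΔL : partialTraceLeft Δ = 0) {t : ℂ} (ht : (1 + t • Δ).PosSemidef) :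
    IsBistochasticChoi ((d : ℂ)⁻¹ • (1 + t • Δ)) := by
  have hd' : (d : ℂ) ≠ 0 := by exact_mod_cast hd
  refine ⟨ht.smul (by positivity), ?_, ?_⟩
  · rw [partialTraceRight_smul, partialTraceRight_add, partialTraceRight_smul, hΔR,
      partialTraceRight_one, hn, smul_zero, add_zero, smul_smul, inv_mul_cancel₀ hd', one_smul]
  · rw [partialTraceLeft_smul, partialTraceLeft_add, partialTraceLeft_smul, hΔL,
      partialTraceLeft_one, hm, smul_zero, add_zero, smul_smul, inv_mul_cancel₀ hd', one_smul]

lemma inv_mul_trace_add_mul_trace_transpose_mul_eq_one (hm : Fintype.card m = d)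
    (hn : Fintype.card n = d) (hd : d ≠ 0)
    (hRC : ∀ C, IsBistochasticChoi C → (Rᵀ * C).trace = 1) (hΔR : partialTraceRight Δ = 0)
    (hΔL : partialTraceLeft Δ = 0) {t : ℂ} (ht : (1 + t • Δ).PosSemidef) :
    (d : ℂ)⁻¹ * (R.trace + t * (Rᵀ * Δ).trace) = 1 := by
  have := hRC _ (isBistochasticChoi_inv_smul_one_add_smul hm hn hd hΔR hΔL ht)
  rwa [Matrix.mul_smul, Matrix.mul_add, Matrix.mul_one, Matrix.mul_smul, trace_smul, trace_add,
    trace_smul, trace_transpose, smul_eq_mul, smul_eq_mul] at this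

lemma trace_eq_of_forall_isBistochasticChoi (hm : Fintype.card m = d)
    (hn : Fintype.card n = d) (hd : d ≠ 0)
    (hRC : ∀ C, IsBistochasticChoi C → (Rᵀ * C).trace = 1) : R.trace = d := by
  have h := inv_mul_trace_add_mul_trace_transpose_mul_eq_one (Δ := 0) (t := 0) hm hn hd hRC
    (by ext; simp) (by ext; simp) (by simpa using PosSemidef.one)
  rw [zero_mul, add_zero, inv_mul_eq_one₀ (by exact_mod_cast hd)] at h
  exact h.symm

lemma trace_mul_eq_zero_of_forall_isBistochasticChoi (hm : Fintype.card m = d)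
    (hn : Fintype.card n = d) (hd : d ≠ 0)
    (hRC : ∀ C, IsBistochasticChoi C → (Rᵀ * C).trace = 1) (hΔ : Δ.IsHermitian)
    (hΔR : partialTraceRight Δ = 0) (hΔL : partialTraceLeft Δ = 0) : (Δ * R).trace = 0 := by
  obtain ⟨ε, hε, hpsd⟩ := hΔ.transpose.exists_pos_posSemidef_one_add_smul
  have hΔR' : partialTraceRight Δᵀ = 0 := by
    rw [partialTraceRight_transpose, hΔR, transpose_zero]
  have hΔL' : partialTraceLeft Δᵀ = 0 := by
    rw [partialTraceLeft_transpose, hΔL, transpose_zero]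
  have h₀ := inv_mul_trace_add_mul_trace_transpose_mul_eq_one (t := 0) hm hn hd hRC hΔR' hΔL'
    (by simpa using PosSemidef.one)
  have h₁ := inv_mul_trace_add_mul_trace_transpose_mul_eq_one hm hn hd hRC hΔR' hΔL' hpsd
  have hdε : (d : ℂ)⁻¹ * ε ≠ 0 := by
    have : (d : ℂ) ≠ 0 := by exact_mod_cast hd
    have : (ε : ℂ) ≠ 0 := by exact_mod_cast hε.ne'
    positivity
  have h : (d : ℂ)⁻¹ * ε * (Rᵀ * Δᵀ).trace = 0 := by linear_combination h₁ - h₀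
  rwa [← transpose_mul, trace_transpose, mul_eq_zero, or_iff_right hdε] at h

lemma eq_localPart_of_forall_isBistochasticChoi (hm : Fintype.card m = d)
    (hn : Fintype.card n = d) (hd : d ≠ 0) (hR : R.IsHermitian)
    (hRC : ∀ C, IsBistochasticChoi C → (Rᵀ * C).trace = 1) : R = localPart d R := by
  have htr := trace_eq_of_forall_isBistochasticChoi hm hn hd hRC
  set S := localPart d R
  have hΔR : partialTraceRight (R - S) = 0 := by
    rw [partialTraceRight_sub, partialTraceRight_localPart hn hd htr, sub_self]
  have hΔL : partialTraceLeft (R - S) = 0 := by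
    rw [partialTraceLeft_sub, partialTraceLeft_localPart hm hd htr, sub_self]
  have hΔ : (R - S).IsHermitian := hR.sub (hR.localPart d)
  have hSΔ : (S * (R - S)).trace = 0 :=
    trace_smul_one_add_kroneckerSum_mul_eq_zero _ _ _ hΔR hΔL
  have hΔΔ : ((R - S)ᴴ * (R - S)).trace = 0 := by
    rw [hΔ.eq, Matrix.mul_sub, trace_sub, trace_mul_comm (R - S) S, hSΔ, sub_zero,
      trace_mul_eq_zero_of_forall_isBistochasticChoi hm hn hd hRC hΔ hΔR hΔL]
  exact sub_eq_zero.mp (trace_conjTranspose_mul_self_eq_zero_iff.mp hΔΔ)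

end Bistochastic

end Matrix

/-- A PSD matrix `R` on `A × B` (with `|A| = |B| = d ≥ 1`) satisfies
`Tr[Rᵀ C] = 1` for every bistochastic channel Choi operator `C` if and only if
`R = (1/d)·1 + X_A ⊗ 1_B + 1_A ⊗ X_B` for traceless Hermitian `X_A`, `X_B`. -/
theorem stmt1 {A B : Type*} [Fintype A] [Fintype B] [DecidableEq A] [DecidableEq B]
    (d : ℕ) (hd : 1 ≤ d) (hA : Fintype.card A = d) (hB : Fintype.card B = d)
    (R : Matrix (A × B) (A × B) ℂ) (hR : R.PosSemidef) :
    (∀ C : Matrix (A × B) (A × B) ℂ, C.PosSemidef →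
      (∀ a a', (∑ b : B, C (a, b) (a', b)) = if a = a' then 1 else 0) →
      (∀ b b', (∑ a : A, C (a, b) (a, b')) = if b = b' then 1 else 0) →
      (Rᵀ * C).trace = 1) ↔
    ∃ (XA : Matrix A A ℂ) (XB : Matrix B B ℂ),
      XA.IsHermitian ∧ XA.trace = 0 ∧ XB.IsHermitian ∧ XB.trace = 0 ∧
      R = (d : ℂ)⁻¹ • 1 + XA ⊗ₖ (1 : Matrix B B ℂ) + (1 : Matrix A A ℂ) ⊗ₖ XB := by
  have hd₀ : d ≠ 0 := by omega
  simp only [← partialTraceRight_eq_one_iff, ← partialTraceLeft_eq_one_iff]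
  constructor
  · intro hRC
    replace hRC : ∀ C, IsBistochasticChoi C → (Rᵀ * C).trace = 1 :=
      fun C ⟨hC, hCR, hCL⟩ => hRC C hC hCR hCL
    have htr := trace_eq_of_forall_isBistochasticChoi hA hB hd₀ hRC
    refine ⟨_, _, hR.isHermitian.partialTraceRight.inv_natCast_smul_sub_one d,
      trace_inv_smul_partialTraceRight_sub_one hA htr,
      hR.isHermitian.partialTraceLeft.inv_natCast_smul_sub_one d,
      trace_inv_smul_partialTraceLeft_sub_one hB htr, ?_⟩
    rw [add_assoc]
    exact eq_localPart_of_forall_isBistochasticChoi hA hB hd₀ hR.isHermitian hRC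
  · rintro ⟨XA, XB, -, hXA, -, hXB, rfl⟩ C - hCR hCL
    rw [add_assoc, ← kroneckerSum,
      trace_transpose_smul_one_add_kroneckerSum_mul _ hXA hXB hCR hCL, hA,
      inv_mul_cancel₀ (by exact_mod_cast hd₀)]
end

section
/- Fix d ≥ 1. Let A = B = Fin d and P = F = Fin d × Fin 2. Define the vector v indexed by P × A × B × F by v((m,c),a,b,(n,c')) = [c = 0 and c' = 0 and a = m and b = n] + [c = 1 and c' = 1 and b = m and a = n] (Iverson brackets), and let R be the rank-one PSD matrix with entries R(u,u') = v(u)·conj(v(u')) (the Choi operator of the quantum time flip). Then for every bistochastic channel Choi operator C indexed by (A × B) × (A × B), the link product R * C is positive semidefinite and satisfies Tr_F[R * C] = 1_P; that is, R * C is the Choi operator of a quantum channel from P to F. -/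
open Matrix ComplexOrder

/-- The vector defining the quantum time flip: for `u = ((m,c), a, b, (n,c'))`,
`v u = [c = 0 ∧ c' = 0 ∧ a = m ∧ b = n] + [c = 1 ∧ c' = 1 ∧ b = m ∧ a = n]`. -/
noncomputable def timeFlipVec (d : ℕ) :
    ((Fin d × Fin 2) × Fin d × Fin d × (Fin d × Fin 2)) → ℂ :=
  fun u =>
    (if u.1.2 = 0 ∧ u.2.2.2.2 = 0 ∧ u.2.1 = u.1.1 ∧ u.2.2.1 = u.2.2.2.1 then 1 else 0) +
    (if u.1.2 = 1 ∧ u.2.2.2.2 = 1 ∧ u.2.2.1 = u.1.1 ∧ u.2.1 = u.2.2.2.1 then 1 else 0)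

/-- The Choi operator of the quantum time flip: the rank-one matrix `R(u,u') = v(u)·conj(v(u'))`. -/
noncomputable def timeFlipChoi (d : ℕ) :
    Matrix ((Fin d × Fin 2) × Fin d × Fin d × (Fin d × Fin 2))
      ((Fin d × Fin 2) × Fin d × Fin d × (Fin d × Fin 2)) ℂ :=
  Matrix.of fun u u' => timeFlipVec d u * (starRingEnd ℂ) (timeFlipVec d u')

/-- The link product `R * C` of a matrix `R` on `P × A × B × F` with a matrix `C` on `A × B`. -/
noncomputable def linkPABF {P A B F : Type*} [Fintype A] [Fintype B]
    (R : Matrix (P × A × B × F) (P × A × B × F) ℂ) (C : Matrix (A × B) (A × B) ℂ) :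
    Matrix (P × F) (P × F) ℂ :=
  Matrix.of fun (u u' : P × F) =>
    ∑ a : A, ∑ b : B, ∑ a' : A, ∑ b' : B,
      R (u.1, a, b, u.2) (u'.1, a', b', u'.2) * C (a, b) (a', b')

def gmap (d : ℕ) : (Fin d × Fin 2) → (Fin d × Fin 2) → Fin d × Fin d :=
  fun p f => if p.2 = 0 then (p.1, f.1) else (f.1, p.1)

noncomputable def Emat (d : ℕ) :
    Matrix (Fin d × Fin d) ((Fin d × Fin 2) × (Fin d × Fin 2)) ℂ :=
  Matrix.of fun ab u => if u.1.2 = u.2.2 ∧ ab = gmap d u.1 u.2 then 1 else 0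

lemma timeFlipVec_eq (d : ℕ) (u : (Fin d × Fin 2) × Fin d × Fin d × (Fin d × Fin 2)) :
    timeFlipVec d u =
      if u.1.2 = u.2.2.2.2 ∧ (u.2.1, u.2.2.1) = gmap d u.1 u.2.2.2 then 1 else 0 := by
  obtain ⟨⟨m, c⟩, a, b, n, c'⟩ := u
  fin_cases c <;> fin_cases c' <;>
    simp [timeFlipVec, gmap, Prod.ext_iff, and_comm]

lemma link_apply (d : ℕ) (C : Matrix (Fin d × Fin d) (Fin d × Fin d) ℂ)
    (u u' : (Fin d × Fin 2) × (Fin d × Fin 2)) :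
    linkPABF (timeFlipChoi d) C u u' =
      if u.1.2 = u.2.2 ∧ u'.1.2 = u'.2.2 then
        C (gmap d u.1 u.2) (gmap d u'.1 u'.2) else 0 := by
  simp only [linkPABF, timeFlipChoi, Matrix.of_apply, timeFlipVec_eq, apply_ite (starRingEnd ℂ), _root_.map_one, _root_.map_zero]
  by_cases h1 : u.1.2 = u.2.2 <;> by_cases h2 : u'.1.2 = u'.2.2 <;>
    simp [h1, h2, Prod.ext_iff, ite_and, Finset.sum_ite_eq', mul_ite, ite_mul,
      mul_zero, zero_mul, mul_one, one_mul]

lemma EmatCE_apply (d : ℕ) (C : Matrix (Fin d × Fin d) (Fin d × Fin d) ℂ)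
    (u u' : (Fin d × Fin 2) × (Fin d × Fin 2)) :
    ((Emat d)ᴴ * C * Emat d) u u' =
      if u.1.2 = u.2.2 ∧ u'.1.2 = u'.2.2 then
        C (gmap d u.1 u.2) (gmap d u'.1 u'.2) else 0 := by
  simp only [Matrix.mul_apply, Matrix.conjTranspose_apply, Emat, Matrix.of_apply,
    apply_ite (star : ℂ → ℂ), star_one, star_zero]
  by_cases h1 : u.1.2 = u.2.2 <;> by_cases h2 : u'.1.2 = u'.2.2 <;>
    simp [h1, h2, ite_and, Finset.sum_ite_eq', mul_ite, ite_mul,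
      mul_zero, zero_mul, mul_one, one_mul, Finset.mul_sum, Finset.sum_mul]

lemma link_eq (d : ℕ) (C : Matrix (Fin d × Fin d) (Fin d × Fin d) ℂ) :
    linkPABF (timeFlipChoi d) C = (Emat d)ᴴ * C * Emat d := by
  ext u u'
  rw [link_apply, EmatCE_apply]

/-- the quantum time flip maps every bistochastic channel Choi operator `C`
to the Choi operator of a quantum channel from `P = Fin d × Fin 2` to `F = Fin d × Fin 2`:
`R * C` is PSD and `Tr_F[R * C] = 1_P`. -/
theorem stmt4 (d : ℕ) (hd : 1 ≤ d)
    (C : Matrix (Fin d × Fin d) (Fin d × Fin d) ℂ) (hC : C.PosSemidef)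
    (hCB : ∀ a a', (∑ b : Fin d, C (a, b) (a', b)) = if a = a' then 1 else 0)
    (hCA : ∀ b b', (∑ a : Fin d, C (a, b) (a, b')) = if b = b' then 1 else 0) :
    (linkPABF (timeFlipChoi d) C).PosSemidef ∧
    (∀ p p' : Fin d × Fin 2,
      (∑ f : Fin d × Fin 2, linkPABF (timeFlipChoi d) C (p, f) (p', f)) =
        if p = p' then 1 else 0) := by
  constructor
  · rw [link_eq]
    exact hC.conjTranspose_mul_mul_same _
  · intro p p'
    simp only [link_apply]
    obtain ⟨m, c⟩ := p
    obtain ⟨m', c'⟩ := p'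
    rw [Fintype.sum_prod_type]
    fin_cases c <;> fin_cases c' <;>
      simp [Fin.sum_univ_two, gmap, Prod.ext_iff, hCA, hCB]
end

section
/- Fix d ≥ 2. Let A = B = Fin d and P = F = Fin d × Fin 2. Define the vector v indexed by P × A × B × F by v((m,c),a,b,(n,c')) = [c = 0 and c' = 0 and a = m and b = n] + [c = 1 and c' = 1 and b = m and a = n] (Iverson brackets), and let R be the rank-one PSD matrix with entries R(u,u') = v(u)·conj(v(u')) (the Choi operator of the quantum time flip). Then R is not the Choi operator of an ordinary deterministic quantum supermap: there exists a quantum channel Choi operator C indexed by (A × B) × (A × B) (i.e., C PSD with Tr_B[C] = 1_A, not necessarily bistochastic) such that Tr_F[R * C] ≠ 1_P. -/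
open Matrix ComplexOrder

/-- for `d ≥ 2`, the quantum time flip is not an ordinary deterministic
quantum supermap: there is a (not necessarily bistochastic) channel Choi operator `C`
such that `Tr_F[R * C] ≠ 1_P`. -/
theorem stmt5 (d : ℕ) (hd : 2 ≤ d) :
    ∃ C : Matrix (Fin d × Fin d) (Fin d × Fin d) ℂ,
      C.PosSemidef ∧
      (∀ a a', (∑ b : Fin d, C (a, b) (a', b)) = if a = a' then 1 else 0) ∧
      ¬ (∀ p p' : Fin d × Fin 2,
          (∑ f : Fin d × Fin 2, linkPABF (timeFlipChoi d) C (p, f) (p', f)) =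
            if p = p' then 1 else 0) := by
  haveI : NeZero d := ⟨by omega⟩
  set N : Matrix (Fin d) (Fin d × Fin d) ℂ :=
    Matrix.of fun k ab => if ab.1 = k ∧ ab.2 = 0 then 1 else 0 with hN
  have hCent : ∀ a b a' b', (Nᴴ * N) (a, b) (a', b') =
      if a = a' ∧ b = 0 ∧ b' = 0 then 1 else 0 := by
    intro a b a' b'
    simp only [Matrix.mul_apply, Matrix.conjTranspose_apply, hN, Matrix.of_apply]
    by_cases hb : b = 0 <;> by_cases hb' : b' = 0 <;>
      simp [hb, hb', eq_comm, apply_ite, Finset.sum_ite_eq]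
  refine ⟨Nᴴ * N, Matrix.posSemidef_conjTranspose_mul_self N, ?_, ?_⟩
  · intro a a'
    simp only [hCent]
    by_cases h : a = a' <;> simp [h, Finset.sum_ite_eq]
  · intro h
    set m : Fin d := ⟨1, by omega⟩ with hm
    have hm0 : m ≠ 0 := by simp [hm, Fin.ext_iff]
    have h1 := h (m, 1) (m, 1)
    rw [if_pos rfl] at h1
    have hz : (∑ f : Fin d × Fin 2,
        linkPABF (timeFlipChoi d) (Nᴴ * N) ((m, 1), f) ((m, 1), f)) = 0 := by
      apply Finset.sum_eq_zero
      intro f _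
      simp only [linkPABF, Matrix.of_apply]
      apply Finset.sum_eq_zero; intro a _
      apply Finset.sum_eq_zero; intro b _
      apply Finset.sum_eq_zero; intro a' _
      apply Finset.sum_eq_zero; intro b' _
      by_cases hb : b = 0
      · have hv : timeFlipVec d ((m, 1), a, b, f) = 0 := by
          simp [timeFlipVec, hb, hm0.symm]
        simp [timeFlipChoi, hv]
      · rw [hCent]
        simp [hb]
    rw [hz] at h1
    exact one_ne_zero h1.symm
end

section
/- Let I, K, J be finite index types, let M be a positive semidefinite complex matrix indexed by (I × K) × (I × K), and let N be a positive semidefinite complex matrix indexed by (K × J) × (K × J). Then the link product N * M, defined as the matrix indexed by I × J with entries (N * M)((i,j),(i',j')) = Σ_{k,k'} M((i,k),(i',k')) · N((k,j),(k',j')), is positive semidefinite. -/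
open Matrix ComplexOrder

open scoped Kronecker

/-!
The link product is a compression of the Kronecker product: with the 0/1 matrix `E` whose column
`(i, j)` is `∑ k, e_{((i, k), (k, j))}`, it equals `Eᴴ (M ⊗ N) E`. Kronecker products and
congruences `Eᴴ X E` of positive semidefinite matrices are positive semidefinite.
-/

namespace Matrix

variable {I K J R : Type*} [Fintype I] [Fintype K] [Fintype J]

def linkProduct [CommSemiring R] (M : Matrix (I × K) (I × K) R) (N : Matrix (K × J) (K × J) R) :
    Matrix (I × J) (I × J) R :=
  of fun p q => ∑ k : K, ∑ k' : K, M (p.1, k) (q.1, k') * N (k, p.2) (k', q.2)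

variable (I K J R) in
def linkContraction [DecidableEq I] [DecidableEq K] [DecidableEq J] [Zero R] [One R] :
    Matrix ((I × K) × (K × J)) (I × J) R :=
  of fun r p => if r.1.1 = p.1 ∧ r.1.2 = r.2.1 ∧ r.2.2 = p.2 then 1 else 0

theorem linkProduct_eq_conjTranspose_mul_kronecker_mul [DecidableEq I] [DecidableEq K]
    [DecidableEq J] [CommSemiring R] [StarRing R]
    (M : Matrix (I × K) (I × K) R) (N : Matrix (K × J) (K × J) R) :
    linkProduct M N =
      (linkContraction I K J R)ᴴ * (M ⊗ₖ N) * linkContraction I K J R := by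
  ext p q
  simp only [mul_apply, linkProduct, linkContraction, conjTranspose_apply, of_apply,
    kroneckerMap_apply, Fintype.sum_prod_type]
  simp [apply_ite star, ite_and]
  rw [Finset.sum_comm]

theorem PosSemidef.linkProduct [RCLike R] {M : Matrix (I × K) (I × K) R}
    {N : Matrix (K × J) (K × J) R} (hM : M.PosSemidef) (hN : N.PosSemidef) :
    (linkProduct M N).PosSemidef := by
  classical
  rw [Matrix.linkProduct_eq_conjTranspose_mul_kronecker_mul]
  exact (hM.kronecker hN).conjTranspose_mul_mul_same _

end Matrix

/-- the link product of two PSD matrices is PSD: for `M` PSD on `I × K` and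
`N` PSD on `K × J`, the matrix `(N * M)((i,j),(i',j')) = Σ_{k,k'} M((i,k),(i',k'))·N((k,j),(k',j'))`
is PSD. -/
theorem stmt6 {I K J : Type*} [Fintype I] [Fintype K] [Fintype J]
    (M : Matrix (I × K) (I × K) ℂ) (N : Matrix (K × J) (K × J) ℂ)
    (hM : M.PosSemidef) (hN : N.PosSemidef) :
    (Matrix.of fun (p q : I × J) =>
      ∑ k : K, ∑ k' : K, M (p.1, k) (q.1, k') * N (k, p.2) (k', q.2)).PosSemidef :=
  hM.linkProduct hN
end

section
/- Let n ∈ {2,3} and let A_1 = B_1 = A_2 = B_2 = Fin n. Define the diagonal matrix R_n indexed by A_1 × B_1 × A_2 × B_2 with entries R_n((i,j,k,l),(i',j',k',l')) = 1 if (i,j,k,l) = (i',j',k',l') and i = (j + l) mod n and k = (j − l) mod n, and 0 otherwise. Then R_n is not an ordinary bipartite process matrix with trivial global input and output: there exist quantum channel Choi operators C_1 (PSD, indexed by A_1 × B_1, Tr_{B_1}[C_1] = 1_{A_1}) and C_2 (PSD, indexed by A_2 × B_2, Tr_{B_2}[C_2] = 1_{A_2}) such that Tr[R_nᵀ (C_1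 ⊗ C_2)] ≠ 1. -/
open Matrix ComplexOrder

/-- The Liu–Chiribella `(2,3,?)` process: the diagonal matrix on `Fin n ×⁴` whose
diagonal entry at `(i,j,k,l)` is `1` iff `i = (j + l) mod n` and `k = (j − l) mod n`. -/
noncomputable def RLC23 (n : ℕ) :
    Matrix (Fin n × Fin n × Fin n × Fin n) (Fin n × Fin n × Fin n × Fin n) ℂ :=
  Matrix.of fun u u' =>
    if u = u' ∧ (u.1 : ℕ) = ((u.2.1 : ℕ) + (u.2.2.2 : ℕ)) % n ∧
        (u.2.2.1 : ℕ) = ((u.2.1 : ℕ) + n - (u.2.2.2 : ℕ)) % n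
    then 1 else 0

/-- The tensor (Kronecker) product of a matrix on `A1 × B1` and a matrix on `A2 × B2`,
indexed by `A1 × B1 × A2 × B2`. -/
noncomputable def kron2 {A1 B1 A2 B2 : Type*}
    (C1 : Matrix (A1 × B1) (A1 × B1) ℂ) (C2 : Matrix (A2 × B2) (A2 × B2) ℂ) :
    Matrix (A1 × B1 × A2 × B2) (A1 × B1 × A2 × B2) ℂ :=
  Matrix.of fun u u' =>
    C1 (u.1, u.2.1) (u'.1, u'.2.1) * C2 (u.2.2.1, u.2.2.2) (u'.2.2.1, u'.2.2.2)

noncomputable def myB1 (n : ℕ) : Matrix Unit (Fin n × Fin n) ℂ :=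
  Matrix.of fun _ p => if p.1 = p.2 then 1 else 0

noncomputable def myB2 (n : ℕ) : Matrix (Fin n) (Fin n × Fin n) ℂ :=
  Matrix.of fun a p => if p.1 = a ∧ (p.2 : ℕ) = 0 then 1 else 0

lemma hC1 (n : ℕ) (p q : Fin n × Fin n) :
    ((myB1 n)ᴴ * (myB1 n)) p q
      = (if p.1 = p.2 then 1 else 0) * (if q.1 = q.2 then (1:ℂ) else 0) := by
  simp only [Matrix.mul_apply, Matrix.conjTranspose_apply, myB1, Matrix.of_apply,
    Finset.univ_unique, Finset.sum_singleton, apply_ite (star : ℂ → ℂ), star_one, star_zero]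

lemma hC2 (n : ℕ) (p q : Fin n × Fin n) :
    ((myB2 n)ᴴ * (myB2 n)) p q
      = if p.1 = q.1 ∧ (p.2 : ℕ) = 0 ∧ (q.2 : ℕ) = 0 then (1:ℂ) else 0 := by
  simp only [Matrix.mul_apply, Matrix.conjTranspose_apply, myB2, Matrix.of_apply,
    apply_ite (star : ℂ → ℂ), star_one, star_zero]
  by_cases h2 : (p.2 : ℕ) = 0 <;> by_cases h3 : (q.2 : ℕ) = 0 <;>
    simp [h2, h3, Finset.sum_ite_eq', eq_comm]

lemma pt1 (n : ℕ) (a a' : Fin n) :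
    (∑ b : Fin n, ((myB1 n)ᴴ * (myB1 n)) (a, b) (a', b)) = if a = a' then 1 else 0 := by
  simp only [hC1]
  simp only [ite_mul, one_mul, zero_mul, Finset.sum_ite_eq, Finset.mem_univ, if_true]
  simp [eq_comm]

lemma pt2 (n : ℕ) (hpos : 0 < n) (a a' : Fin n) :
    (∑ b : Fin n, ((myB2 n)ᴴ * (myB2 n)) (a, b) (a', b)) = if a = a' then 1 else 0 := by
  simp only [hC2]
  have hb : ∀ b : Fin n, ((b : ℕ) = 0) = (b = ⟨0, hpos⟩) := by
    intro b; simp [Fin.ext_iff]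
  by_cases h : a = a' <;> simp [h, hb, Finset.sum_ite_eq']

lemma hK (n : ℕ) (u : Fin n × Fin n × Fin n × Fin n) :
    kron2 ((myB1 n)ᴴ * (myB1 n)) ((myB2 n)ᴴ * (myB2 n)) u u
      = if u.2.1 = u.1 ∧ (u.2.2.2 : ℕ) = 0 then 1 else 0 := by
  simp only [kron2, Matrix.of_apply, hC1, hC2]
  by_cases h1 : u.1 = u.2.1 <;> by_cases h2 : (u.2.2.2 : ℕ) = 0 <;>
    simp [h1, h2, eq_comm]

lemma htr (n : ℕ) (hpos : 0 < n) :
    ((RLC23 n)ᵀ * kron2 ((myB1 n)ᴴ * (myB1 n)) ((myB2 n)ᴴ * (myB2 n))).trace = n := by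
  classical
  set K := kron2 ((myB1 n)ᴴ * (myB1 n)) ((myB2 n)ᴴ * (myB2 n)) with hKdef
  set P : Fin n × Fin n × Fin n × Fin n → Prop := fun u =>
    (u.1 : ℕ) = ((u.2.1 : ℕ) + (u.2.2.2 : ℕ)) % n ∧
      (u.2.2.1 : ℕ) = ((u.2.1 : ℕ) + n - (u.2.2.2 : ℕ)) % n with hP
  have step : ∀ u, (∑ v, (RLC23 n)ᵀ u v * K v u) = if P u then K u u else 0 := by
    intro u
    rw [Finset.sum_eq_single u]
    · simp only [Matrix.transpose_apply, RLC23, Matrix.of_apply, hP]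
      by_cases h : P u <;> simp_all [hP]
    · intro v _ hv
      simp only [Matrix.transpose_apply, RLC23, Matrix.of_apply]
      simp [hv]
    · simp
  have step2 : ∀ u, (if P u then K u u else 0)
      = if u.2.1 = u.1 ∧ u.2.2.1 = u.1 ∧ u.2.2.2 = (⟨0, hpos⟩ : Fin n) then (1:ℂ) else 0 := by
    rintro ⟨i, j, k, l⟩
    rw [hKdef, hK]
    by_cases hj : j = i
    · by_cases hl : (l : ℕ) = 0
      · have hl' : l = (⟨0, hpos⟩ : Fin n) := Fin.ext (by simpa using hl)
        have e1 : ((j : ℕ) + (l : ℕ)) % n = (i : ℕ) := by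
          rw [hj, hl]; simp [Nat.mod_eq_of_lt i.isLt]
        have e2 : ((j : ℕ) + n - (l : ℕ)) % n = (i : ℕ) := by
          rw [hj, hl]; simp [Nat.add_mod_right, Nat.mod_eq_of_lt i.isLt]
        have hPiff : P (i, j, k, l) ↔ k = i := by
          rw [hP]
          simp only
          rw [e1, e2]
          simp [Fin.ext_iff]
        by_cases hk : k = i
        · rw [if_pos (hPiff.mpr hk)]
          simp [hj, hk, hl, hl']
        · rw [if_neg (fun h => hk (hPiff.mp h))]
          simp [hk]
      · have hl' : l ≠ (⟨0, hpos⟩ : Fin n) := by simp [Fin.ext_iff, hl]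
        simp [hl, hl']
    · simp [hj]
  calc ((RLC23 n)ᵀ * K).trace = ∑ u, ∑ v, (RLC23 n)ᵀ u v * K v u := by
        simp [Matrix.trace, Matrix.mul_apply]
    _ = ∑ u : Fin n × Fin n × Fin n × Fin n,
          if u.2.1 = u.1 ∧ u.2.2.1 = u.1 ∧ u.2.2.2 = (⟨0, hpos⟩ : Fin n) then (1:ℂ) else 0 := by
        refine Finset.sum_congr rfl fun u _ => ?_
        rw [step u, step2 u]
    _ = n := by
        simp [Fintype.sum_prod_type, ite_and, Finset.sum_ite_eq', Finset.sum_ite_eq]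

/-- for `n ∈ {2,3}`, the Liu–Chiribella `(2,3,?)` process `R_n` is not an
ordinary bipartite process matrix with trivial global input and output: there exist
(not necessarily bistochastic) channel Choi operators `C1`, `C2` with
`Tr[R_nᵀ (C1 ⊗ C2)] ≠ 1`. -/
theorem stmt12 (n : ℕ) (hn : n = 2 ∨ n = 3) :
    ∃ (C1 C2 : Matrix (Fin n × Fin n) (Fin n × Fin n) ℂ),
      C1.PosSemidef ∧
      (∀ a a', (∑ b : Fin n, C1 (a, b) (a', b)) = if a = a' then 1 else 0) ∧
      C2.PosSemidef ∧
      (∀ a a', (∑ b : Fin n, C2 (a, b) (a', b)) = if a = a' then 1 else 0) ∧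
      ((RLC23 n)ᵀ * kron2 C1 C2).trace ≠ 1 := by
  have hpos : 0 < n := by rcases hn with h | h <;> omega
  refine ⟨(myB1 n)ᴴ * (myB1 n), (myB2 n)ᴴ * (myB2 n),
    Matrix.posSemidef_conjTranspose_mul_self _, pt1 n,
    Matrix.posSemidef_conjTranspose_mul_self _, pt2 n hpos, ?_⟩
  rw [htr n hpos]
  rcases hn with h | h <;> subst h <;> norm_num
end

section
/- Fix d ≥ 2 and two distinct elements x, y ∈ Fin d. Let A_1 = B_1 = A_2 = B_2 = Fin d, write P_z = |z⟩⟨z| for the rank-one diagonal projector onto basis element z, and define the matrix R indexed by A_1 × B_1 × A_2 × B_2 by R = (1 − P_y) ⊗ P_x ⊗ P_x ⊗ P_x + (1 − P_y) ⊗ P_y ⊗ P_x ⊗ P_y + P_y ⊗ P_x ⊗ (1 − P_x) ⊗ P_y + P_y ⊗ P_y ⊗ (1 − P_x) ⊗ P_x + P_y ⊗ (1 − P_x − P_y) ⊗ P_x ⊗ (1 − P_x − P_y). Then R is positive semidefinite, and for every pair of bistochastic channel Choi operators C_1 (indexed by A_1 × B_1) and C_2 (indexed by A_2 × B_2), one has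 Tr[Rᵀ (C_1 ⊗ C_2)] = 1. -/
open Matrix ComplexOrder

/-- The rank-one diagonal projector `|z⟩⟨z|` onto the basis element `z` of `Fin d`. -/
noncomputable def proj (d : ℕ) (z : Fin d) : Matrix (Fin d) (Fin d) ℂ :=
  Matrix.of fun i j => if i = z ∧ j = z then 1 else 0

/-- The tensor (Kronecker) product of four matrices on `Fin d`, indexed by
`Fin d × Fin d × Fin d × Fin d`. -/
noncomputable def kron4 {d : ℕ} (M1 M2 M3 M4 : Matrix (Fin d) (Fin d) ℂ) :
    Matrix (Fin d × Fin d × Fin d × Fin d) (Fin d × Fin d × Fin d × Fin d) ℂ :=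
  Matrix.of fun u u' =>
    M1 u.1 u'.1 * M2 u.2.1 u'.2.1 * M3 u.2.2.1 u'.2.2.1 * M4 u.2.2.2 u'.2.2.2

/-- The Liu–Chiribella `(2,2,?)` process. -/
noncomputable def RLC22 (d : ℕ) (x y : Fin d) :
    Matrix (Fin d × Fin d × Fin d × Fin d) (Fin d × Fin d × Fin d × Fin d) ℂ :=
  kron4 (1 - proj d y) (proj d x) (proj d x) (proj d x) +
  kron4 (1 - proj d y) (proj d y) (proj d x) (proj d y) +
  kron4 (proj d y) (proj d x) (1 - proj d x) (proj d y) +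
  kron4 (proj d y) (proj d y) (1 - proj d x) (proj d x) +
  kron4 (proj d y) (1 - proj d x - proj d y) (proj d x) (1 - proj d x - proj d y)

/- Auxiliary lemmas -/

lemma proj_ne {d : ℕ} {z i j : Fin d} (h : i ≠ j) : proj d z i j = 0 := by
  simp only [proj, Matrix.of_apply, ite_eq_right_iff]
  rintro ⟨rfl, rfl⟩; exact absurd rfl h

lemma one_sub_proj_ne {d : ℕ} {z i j : Fin d} (h : i ≠ j) : (1 - proj d z) i j = 0 := by
  simp [Matrix.sub_apply, Matrix.one_apply_ne h, proj_ne h]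

lemma one_sub2_ne {d : ℕ} {z w i j : Fin d} (h : i ≠ j) : (1 - proj d z - proj d w) i j = 0 := by
  simp [Matrix.sub_apply, Matrix.one_apply_ne h, proj_ne h]

lemma RLC22_ne {d : ℕ} {x y : Fin d} {u v : Fin d × Fin d × Fin d × Fin d} (h : u ≠ v) :
    RLC22 d x y u v = 0 := by
  obtain ⟨a1, b1, a2, b2⟩ := u
  obtain ⟨c1, e1, c2, e2⟩ := v
  by_cases h1 : a1 = c1
  · by_cases h2 : b1 = e1
    · by_cases h3 : a2 = c2
      · by_cases h4 : b2 = e2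
        · exact absurd (by simp [h1,h2,h3,h4]) h
        · simp [RLC22, kron4, Matrix.add_apply, proj_ne h4, one_sub_proj_ne h4,
            one_sub2_ne h4, Matrix.sub_apply, Matrix.one_apply, h4]
      · simp [RLC22, kron4, Matrix.add_apply, proj_ne h3, one_sub_proj_ne h3,
          one_sub2_ne h3, Matrix.sub_apply, Matrix.one_apply, h3]
    · simp [RLC22, kron4, Matrix.add_apply, proj_ne h2, one_sub_proj_ne h2,
        one_sub2_ne h2, Matrix.sub_apply, Matrix.one_apply, h2]
  · simp [RLC22, kron4, Matrix.add_apply, proj_ne h1, one_sub_proj_ne h1,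
      one_sub2_ne h1, Matrix.sub_apply, Matrix.one_apply, h1]

lemma RLC22_posSemidef {d : ℕ} {x y : Fin d} (hxy : x ≠ y) : (RLC22 d x y).PosSemidef := by
  have hdiag : RLC22 d x y = Matrix.diagonal (fun u => RLC22 d x y u u) := by
    ext u v
    by_cases h : u = v
    · subst h; simp [Matrix.diagonal_apply_eq]
    · rw [Matrix.diagonal_apply_ne _ h, RLC22_ne h]
  rw [hdiag, Matrix.posSemidef_diagonal_iff]
  rintro ⟨a1, b1, a2, b2⟩
  simp only [RLC22, kron4, Matrix.add_apply, Matrix.sub_apply, Matrix.one_apply,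
    Matrix.of_apply, proj, and_self, if_true]
  split_ifs <;> norm_num <;> simp_all

lemma sum_if_const {d : ℕ} (P : Prop) [Decidable P] (f : Fin d → ℂ) :
    (∑ i, if P then f i else 0) = if P then ∑ i, f i else 0 := by
  split_ifs <;> simp

lemma key {d : ℕ} (x y : Fin d) (p q : Fin d → Fin d → ℂ)
    (hp1 : ∀ a, ∑ b, p a b = 1) (hp2 : ∀ b, ∑ a, p a b = 1)
    (hq1 : ∀ a, ∑ b, q a b = 1) (hq2 : ∀ b, ∑ a, q a b = 1) :
    (∑ a1, ∑ b1, ∑ a2, ∑ b2,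
      ((1 - if a1 = y then (1:ℂ) else 0) * (if b1 = x then 1 else 0) * (if a2 = x then 1 else 0) * (if b2 = x then 1 else 0) +
       (1 - if a1 = y then (1:ℂ) else 0) * (if b1 = y then 1 else 0) * (if a2 = x then 1 else 0) * (if b2 = y then 1 else 0) +
       (if a1 = y then (1:ℂ) else 0) * (if b1 = x then 1 else 0) * (1 - if a2 = x then 1 else 0) * (if b2 = y then 1 else 0) +
       (if a1 = y then (1:ℂ) else 0) * (if b1 = y then 1 else 0) * (1 - if a2 = x then 1 else 0) * (if b2 = x then 1 else 0) +
       (if a1 = y then (1:ℂ) else 0) * (1 - (if b1 = x then (1:ℂ) else 0) - (if b1 = y then 1 else 0)) * (if a2 = x then 1 else 0) * (1 - (if b2 = x then (1:ℂ) else 0) - (if b2 = y then 1 else 0)))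
      * (p a1 b1 * q a2 b2)) = 1 := by
  simp only [sub_mul, ite_mul, one_mul, zero_mul, mul_ite, mul_zero, mul_one, add_mul,
    Finset.sum_add_distrib, Finset.sum_sub_distrib, Finset.sum_ite_eq', Finset.mem_univ,
    if_true, zero_sub, sub_zero, neg_mul, Finset.sum_neg_distrib, sum_if_const]
  simp only [← Finset.sum_mul, ← Finset.mul_sum, hp1, hp2, hq1, hq2, one_mul, mul_one]
  ring

lemma RLC22_diag {d : ℕ} (x y : Fin d) (a1 b1 a2 b2 : Fin d) :
    RLC22 d x y (a1, b1, a2, b2) (a1, b1, a2, b2) =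
      (1 - if a1 = y then (1:ℂ) else 0) * (if b1 = x then 1 else 0) * (if a2 = x then 1 else 0) * (if b2 = x then 1 else 0) +
      (1 - if a1 = y then (1:ℂ) else 0) * (if b1 = y then 1 else 0) * (if a2 = x then 1 else 0) * (if b2 = y then 1 else 0) +
      (if a1 = y then (1:ℂ) else 0) * (if b1 = x then 1 else 0) * (1 - if a2 = x then 1 else 0) * (if b2 = y then 1 else 0) +
      (if a1 = y then (1:ℂ) else 0) * (if b1 = y then 1 else 0) * (1 - if a2 = x then 1 else 0) * (if b2 = x then 1 else 0) +
      (if a1 = y then (1:ℂ) else 0) * (1 - (if b1 = x then (1:ℂ) else 0) - (if b1 = y then 1 else 0)) * (if a2 = x then 1 else 0) * (1 - (if b2 = x then (1:ℂ) else 0) - (if b2 = y then 1 else 0)) := by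
  simp [RLC22, kron4, Matrix.add_apply, Matrix.sub_apply, Matrix.one_apply, proj, and_self]

/-- for `d ≥ 2` and distinct `x y : Fin d`, the Liu–Chiribella `(2,2,?)`
process `R` is PSD and satisfies `Tr[Rᵀ (C1 ⊗ C2)] = 1` for every pair of bistochastic
channel Choi operators `C1`, `C2`. -/
theorem stmt13 (d : ℕ) (hd : 2 ≤ d) (x y : Fin d) (hxy : x ≠ y) :
    (RLC22 d x y).PosSemidef ∧
    (∀ (C1 C2 : Matrix (Fin d × Fin d) (Fin d × Fin d) ℂ),
      C1.PosSemidef →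
      (∀ a a', (∑ b : Fin d, C1 (a, b) (a', b)) = if a = a' then 1 else 0) →
      (∀ b b', (∑ a : Fin d, C1 (a, b) (a, b')) = if b = b' then 1 else 0) →
      C2.PosSemidef →
      (∀ a a', (∑ b : Fin d, C2 (a, b) (a', b)) = if a = a' then 1 else 0) →
      (∀ b b', (∑ a : Fin d, C2 (a, b) (a, b')) = if b = b' then 1 else 0) →
      ((RLC22 d x y)ᵀ * kron2 C1 C2).trace = 1) := by
  refine ⟨RLC22_posSemidef hxy, ?_⟩
  intro C1 C2 _ h1r h1c _ h2r h2c
  have htr : ((RLC22 d x y)ᵀ * kron2 C1 C2).trace =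
      ∑ i : Fin d × Fin d × Fin d × Fin d,
        RLC22 d x y i i * kron2 C1 C2 i i := by
    rw [Matrix.trace]
    refine Finset.sum_congr rfl fun i _ => ?_
    rw [Matrix.diag_apply, Matrix.mul_apply]
    refine Finset.sum_eq_single i (fun j _ hj => ?_) (by simp)
    rw [Matrix.transpose_apply, RLC22_ne hj, zero_mul]
  rw [htr]
  rw [Fintype.sum_prod_type]
  simp only [Fintype.sum_prod_type]
  have : ∀ a1 b1 a2 b2 : Fin d,
      RLC22 d x y (a1, b1, a2, b2) (a1, b1, a2, b2) * kron2 C1 C2 (a1, b1, a2, b2) (a1, b1, a2, b2)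
        = (RLC22 d x y (a1, b1, a2, b2) (a1, b1, a2, b2)) *
          (C1 (a1, b1) (a1, b1) * C2 (a2, b2) (a2, b2)) := by
    intro a1 b1 a2 b2; rfl
  simp only [this, RLC22_diag]
  exact key x y (fun a b => C1 (a, b) (a, b)) (fun a b => C2 (a, b) (a, b))
    (fun a => by simpa using h1r a a) (fun b => by simpa using h1c b b)
    (fun a => by simpa using h2r a a) (fun b => by simpa using h2c b b)
end

section
/- Fix d ≥ 3 and two distinct elements x, y ∈ Fin d. Let A_1 = B_1 = A_2 = B_2 = Fin d, write P_z = |z⟩⟨z| for the rank-one diagonal projector onto basis element z, and define the matrix R indexed by A_1 × B_1 × A_2 × B_2 by R = (1 − P_y) ⊗ P_x ⊗ P_x ⊗ P_x + (1 − P_y) ⊗ P_y ⊗ P_x ⊗ P_y + P_y ⊗ P_x ⊗ (1 − P_x) ⊗ P_y + P_y ⊗ P_y ⊗ (1 − P_x) ⊗ P_x + P_y ⊗ (1 − P_x − P_y) ⊗ P_x ⊗ (1 − P_x − P_y) (the Liu–Chiribella (2,2,?) process). Then R is not an ordinary bipartite process matrix with trivial global input and output: there exist quantum channel Choi operators C_1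 (PSD, indexed by A_1 × B_1, Tr_{B_1}[C_1] = 1_{A_1}) and C_2 (PSD, indexed by A_2 × B_2, Tr_{B_2}[C_2] = 1_{A_2}) such that Tr[Rᵀ (C_1 ⊗ C_2)] ≠ 1. -/
open Matrix ComplexOrder

/-!
Feed both parties the channel that discards its input and prepares `|x⟩`. Its Choi operator
`1 ⊗ |x⟩⟨x|` is diagonal, so `Tr[Rᵀ (C ⊗ C)]` only sees the diagonal entries of `R` with
`b₁ = b₂ = x`. Of the five terms of `R` only the first survives there, contributing
`Tr(1 - P_y) · Tr P_x = d - 1`, which differs from `1` once `d ≥ 3`.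
-/

open scoped Kronecker

lemma proj_eq_diagonal (d : ℕ) (z : Fin d) : proj d z = diagonal (Pi.single z 1) := by
  ext i j
  simp only [proj, diagonal, of_apply, Pi.single_apply]
  grind

lemma proj_posSemidef (d : ℕ) (z : Fin d) : (proj d z).PosSemidef := by
  rw [proj_eq_diagonal]
  exact PosSemidef.diagonal fun i => by by_cases h : i = z <;> simp [h]

lemma trace_proj (d : ℕ) (z : Fin d) : (proj d z).trace = 1 := by
  simp [proj_eq_diagonal]

lemma sum_one_kronecker_apply {A B : Type*} [Fintype B] [DecidableEq A] (ρ : Matrix B B ℂ)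
    (a a' : A) :
    ∑ b, ((1 : Matrix A A ℂ) ⊗ₖ ρ) (a, b) (a', b) = if a = a' then ρ.trace else 0 := by
  by_cases h : a = a' <;> simp [h, trace, one_apply]

/-- Choi operator of the channel that discards its input and prepares `|z⟩⟨z|`. -/
noncomputable def prepareChoi (d : ℕ) (z : Fin d) : Matrix (Fin d × Fin d) (Fin d × Fin d) ℂ :=
  1 ⊗ₖ proj d z

lemma prepareChoi_posSemidef (d : ℕ) (z : Fin d) : (prepareChoi d z).PosSemidef :=
  PosSemidef.one.kronecker (proj_posSemidef d z)

lemma sum_prepareChoi_apply (d : ℕ) (z a a' : Fin d) :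
    ∑ b, prepareChoi d z (a, b) (a', b) = if a = a' then 1 else 0 := by
  rw [prepareChoi, sum_one_kronecker_apply, trace_proj]

lemma prepareChoi_eq_diagonal (d : ℕ) (z : Fin d) :
    prepareChoi d z = diagonal fun q => (Pi.single z 1 : Fin d → ℂ) q.2 := by
  rw [prepareChoi, proj_eq_diagonal, ← diagonal_one, diagonal_kronecker_diagonal]
  simp

lemma kron2_diagonal {A1 B1 A2 B2 : Type*} [DecidableEq A1] [DecidableEq B1] [DecidableEq A2]
    [DecidableEq B2] (u : A1 × B1 → ℂ) (v : A2 × B2 → ℂ) :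
    kron2 (diagonal u) (diagonal v) =
      diagonal fun p => u (p.1, p.2.1) * v (p.2.2.1, p.2.2.2) := by
  ext ⟨a1, b1, a2, b2⟩ ⟨a1', b1', a2', b2'⟩
  by_cases h1 : a1 = a1' <;> by_cases h2 : b1 = b1' <;> by_cases h3 : a2 = a2' <;>
    by_cases h4 : b2 = b2' <;> simp [kron2, diagonal, h1, h2, h3, h4]

lemma trace_transpose_mul_diagonal {n : Type*} [Fintype n] [DecidableEq n] (A : Matrix n n ℂ)
    (v : n → ℂ) : (Aᵀ * diagonal v).trace = ∑ i, A i i * v i := by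
  simp [trace, mul_diagonal]

lemma sum_mul_single_mul_single {α β γ δ : Type*} [Fintype α] [Fintype β] [Fintype γ]
    [Fintype δ] [DecidableEq β] [DecidableEq δ] (f : α × β × γ × δ → ℂ) (b : β) (e : δ) :
    ∑ p, f p * ((Pi.single b 1 : β → ℂ) p.2.1 * (Pi.single e 1 : δ → ℂ) p.2.2.2) =
      ∑ a, ∑ c, f (a, b, c, e) := by
  simp only [Fintype.sum_prod_type, Pi.single_apply, mul_ite, mul_one, mul_zero,
    Finset.sum_ite_eq', Finset.mem_univ, if_true]
  exact Finset.sum_congr rfl fun a _ => by rw [Finset.sum_comm]; simp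

lemma RLC22_apply_diag (d : ℕ) (x y : Fin d) (hxy : x ≠ y) (a1 a2 : Fin d) :
    RLC22 d x y (a1, x, a2, x) (a1, x, a2, x) =
      (if a1 = y then 0 else 1) * (if a2 = x then 1 else 0) := by
  by_cases h1 : a1 = y <;> by_cases h2 : a2 = x <;>
    simp [RLC22, kron4, proj, one_apply, h1, h2, hxy]

lemma trace_RLC22_transpose_mul_prepareChoi (d : ℕ) (x y : Fin d) (hxy : x ≠ y) :
    ((RLC22 d x y)ᵀ * kron2 (prepareChoi d x) (prepareChoi d x)).trace = d - 1 := by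
  rw [prepareChoi_eq_diagonal, kron2_diagonal, trace_transpose_mul_diagonal,
    sum_mul_single_mul_single (fun p => RLC22 d x y p p)]
  simp [RLC22_apply_diag d x y hxy, Finset.sum_ite, Finset.filter_ne', Nat.cast_pred x.pos]

/-- for `d ≥ 3` and distinct `x y : Fin d`, the Liu–Chiribella `(2,2,?)`
process `R` is not an ordinary bipartite process matrix with trivial global input and
output: there exist (not necessarily bistochastic) channel Choi operators `C1`, `C2`
with `Tr[Rᵀ (C1 ⊗ C2)] ≠ 1`. -/
theorem stmt14 (d : ℕ) (hd : 3 ≤ d) (x y : Fin d) (hxy : x ≠ y) :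
    ∃ (C1 C2 : Matrix (Fin d × Fin d) (Fin d × Fin d) ℂ),
      C1.PosSemidef ∧
      (∀ a a', (∑ b : Fin d, C1 (a, b) (a', b)) = if a = a' then 1 else 0) ∧
      C2.PosSemidef ∧
      (∀ a a', (∑ b : Fin d, C2 (a, b) (a', b)) = if a = a' then 1 else 0) ∧
      ((RLC22 d x y)ᵀ * kron2 C1 C2).trace ≠ 1 := by
  refine ⟨prepareChoi d x, prepareChoi d x, prepareChoi_posSemidef d x, sum_prepareChoi_apply d x,
    prepareChoi_posSemidef d x, sum_prepareChoi_apply d x, ?_⟩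
  rw [trace_RLC22_transpose_mul_prepareChoi d x y hxy]
  intro h
  have hd2 : (d : ℂ) = 2 := by linear_combination h
  norm_cast at hd2
  omega
end
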